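/- Suppose L_{α,n} satisfies the uniform RSC condition with parameters (γ, τ, α₀, r), the penalty ρ_λ is μ-amenable with μ < γ, and the sample size satisfies n > 2τ s log p / (γ − μ). Then the restricted objective β ↦ L_{α,n}(β) + ρ_λ(β) is strictly convex over the region {β ∈ ℝ^p : supp(β) ⊆ S, ‖β − β*‖₂ ≤ r}. -/

import Mathlib

/-!
On the region every difference `β₁ - β₂` is supported on `S`, so Cauchy–Schwarz gives
`‖β₁ - β₂‖₁² ≤ s ‖β₁ - β₂‖₂²`, and the sample-size condition turns RSC into
`⟪∇L β₁ - ∇L β₂, β₁ - β₂⟫ > μ ‖β₁ - β₂‖₂²`. Hence `L - (μ/2)‖·‖²` has a strictly monotone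
gradient and is strictly convex (restrict to segments and use the one-variable criterion),
while `ρ_λ + (μ/2)(·)²` is convex by amenability; the objective is the sum of the two.
-/

open MeasureTheory Filter Real
open scoped RealInnerProductSpace

noncomputable section

/-- The ℓ¹ norm of a vector. -/
def l1Norm {p : ℕ} (β : EuclideanSpace ℝ (Fin p)) : ℝ := ∑ j, |β j|

/-- A `μa`-amenable penalty with regularization level `lam` (Assumption 1(i)-(vi)). -/
structure AmenablePenalty (ρ : ℝ → ℝ) (lam μa : ℝ) : Prop where
  symm : ∀ t : ℝ, ρ (-t) = ρ t
  zero : ρ 0 = 0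
  mono : MonotoneOn ρ (Set.Ici 0)
  ratio_anti : AntitoneOn (fun t => ρ t / t) (Set.Ioi 0)
  differentiable : ∀ t : ℝ, t ≠ 0 → DifferentiableAt ℝ ρ t
  deriv_lim : Filter.Tendsto (deriv ρ) (nhdsWithin 0 (Set.Ioi 0)) (nhds lam)
  conv : ConvexOn ℝ Set.univ fun t => ρ t + μa / 2 * t ^ 2

/-- The uniform restricted strong convexity condition (Assumption 4). -/
def UniformRSC {p : ℕ} (L : ℝ → EuclideanSpace ℝ (Fin p) → ℝ)
    (βstar : EuclideanSpace ℝ (Fin p)) (γ τ α₀ r : ℝ) (n : ℕ) : Prop :=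
  ∀ α : ℝ, α₀ ≤ α → ∀ β₁ β₂ : EuclideanSpace ℝ (Fin p),
    ‖β₁ - βstar‖ ≤ r → ‖β₂ - βstar‖ ≤ r →
    γ * ‖β₁ - β₂‖ ^ 2 - τ * (Real.log p / n) * (l1Norm (β₁ - β₂)) ^ 2 ≤
      ⟪gradient (L α) β₁ - gradient (L α) β₂, β₁ - β₂⟫

section GradientCriterion

variable {E : Type*} [NormedAddCommGroup E] [InnerProductSpace ℝ E] [CompleteSpace E]
  {s : Set E} {f : E → ℝ} {f' : E → E}

theorem strictConvexOn_of_hasGradientAt_of_inner_sub_pos (hs : Convex ℝ s)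
    (hf : ∀ x ∈ s, HasGradientAt f (f' x) x)
    (hmono : ∀ x ∈ s, ∀ y ∈ s, x ≠ y → 0 < ⟪f' x - f' y, x - y⟫) :
    StrictConvexOn ℝ s f := by
  refine ⟨hs, fun x hx y hy hxy a b ha hb hab => ?_⟩
  set c : ℝ → E := ⇑(AffineMap.lineMap (k := ℝ) x y)
  have hc_mem : ∀ t ∈ Set.Icc (0 : ℝ) 1, c t ∈ s := fun t ht => hs.lineMap_mem hx hy ht
  have hc_sub : ∀ t u : ℝ, c u - c t = (u - t) • (y - x) := fun t u => by
    simp only [c, AffineMap.lineMap_apply_module', sub_smul]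
    abel
  have hderiv : ∀ t ∈ Set.Icc (0 : ℝ) 1, HasDerivAt (f ∘ c) ⟪f' (c t), y - x⟫ t := fun t ht =>
    (hf _ (hc_mem t ht)).hasFDerivAt.comp_hasDerivAt t AffineMap.hasDerivAt_lineMap
  have hderiv_mono : StrictMonoOn (deriv (f ∘ c)) (interior (Set.Icc (0 : ℝ) 1)) := by
    rw [interior_Icc]
    intro t ht u hu htu
    have ht' := Set.Ioo_subset_Icc_self ht
    have hu' := Set.Ioo_subset_Icc_self hu
    have hcne : c u ≠ c t := fun h => by
      have : (u - t) • (y - x) = 0 := by rw [← hc_sub, h, sub_self]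
      rcases smul_eq_zero.1 this with h' | h'
      · linarith [sub_eq_zero.1 h']
      · exact hxy (sub_eq_zero.1 h').symm
    have hpos := hmono _ (hc_mem u hu') _ (hc_mem t ht') hcne
    rw [hc_sub, inner_smul_right, inner_sub_left] at hpos
    rw [(hderiv t ht').deriv, (hderiv u hu').deriv]
    linarith [pos_of_mul_pos_right hpos (sub_pos.2 htu).le]
  have hconv : StrictConvexOn ℝ (Set.Icc (0 : ℝ) 1) (f ∘ c) :=
    hderiv_mono.strictConvexOn_of_deriv (convex_Icc 0 1)
      fun t ht => (hderiv t ht).continuousAt.continuousWithinAt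
  have key := hconv.2 (Set.left_mem_Icc.2 zero_le_one) (Set.right_mem_Icc.2 zero_le_one)
    zero_ne_one ha hb hab
  have ha' : a = 1 - b := by linarith
  simpa [c, AffineMap.lineMap_apply_module, ha'] using key

theorem hasGradientAt_sub_half_mul_norm_sq {x g : E} (hf : HasGradientAt f g x) (μ : ℝ) :
    HasGradientAt (fun y => f y - μ / 2 * ‖y‖ ^ 2) (g - μ • x) x := by
  rw [hasGradientAt_iff_hasFDerivAt]
  refine (hf.hasFDerivAt.sub
    ((hasStrictFDerivAt_norm_sq x).hasFDerivAt.const_mul (μ / 2))).congr_fderiv ?_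
  ext y
  simp [InnerProductSpace.toDual_apply_apply]
  ring

end GradientCriterion

section SparseRegion

variable {p : ℕ}

def restrictedRegion (βstar : EuclideanSpace ℝ (Fin p)) (r : ℝ) :
    Set (EuclideanSpace ℝ (Fin p)) :=
  {β | (∀ j, β j ≠ 0 → βstar j ≠ 0) ∧ ‖β - βstar‖ ≤ r}

theorem convex_restrictedRegion (βstar : EuclideanSpace ℝ (Fin p)) (r : ℝ) :
    Convex ℝ (restrictedRegion βstar r) := by
  have hsupp : Convex ℝ {β : EuclideanSpace ℝ (Fin p) | ∀ j, β j ≠ 0 → βstar j ≠ 0} := by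
    intro x hx y hy a b _ _ _ j hj
    contrapose! hj
    simp [not_imp_not.1 (hx j) hj, not_imp_not.1 (hy j) hj]
  convert hsupp.inter (convex_closedBall βstar r) using 1
  ext β
  simp [restrictedRegion, dist_eq_norm]

theorem l1Norm_sq_le_card_mul_norm_sq {T : Finset (Fin p)} {d : EuclideanSpace ℝ (Fin p)}
    (hd : ∀ j ∉ T, d j = 0) : l1Norm d ^ 2 ≤ T.card * ‖d‖ ^ 2 := by
  have hl1 : l1Norm d = ∑ j ∈ T, |d j| :=
    (Finset.sum_subset (Finset.subset_univ T) fun j _ hj => by simp [hd j hj]).symm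
  calc l1Norm d ^ 2 ≤ T.card * ∑ j ∈ T, |d j| ^ 2 := by
        rw [hl1]; exact sq_sum_le_card_mul_sum_sq
    _ ≤ T.card * ∑ j, |d j| ^ 2 := by gcongr; exact T.subset_univ
    _ = T.card * ‖d‖ ^ 2 := by simp [EuclideanSpace.real_norm_sq_eq]

theorem l1Norm_sub_sq_le_of_mem_restrictedRegion {βstar x y : EuclideanSpace ℝ (Fin p)} {r : ℝ}
    (hx : x ∈ restrictedRegion βstar r) (hy : y ∈ restrictedRegion βstar r) :
    l1Norm (x - y) ^ 2 ≤ (Finset.univ.filter fun j => βstar j ≠ 0).card * ‖x - y‖ ^ 2 := by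
  refine l1Norm_sq_le_card_mul_norm_sq fun j hj => ?_
  have hj : βstar j = 0 := by simpa using hj
  simp [not_imp_not.1 (hx.1 j) hj, not_imp_not.1 (hy.1 j) hj]

theorem mul_norm_sq_lt_inner_gradient_sub_of_uniformRSC {n : ℕ}
    {L : ℝ → EuclideanSpace ℝ (Fin p) → ℝ} {βstar x y : EuclideanSpace ℝ (Fin p)}
    {γ τ α₀ r μa α : ℝ}
    (hRSC : UniformRSC L βstar γ τ α₀ r n) (hα : α₀ ≤ α) (hτ : 0 ≤ τ)
    (hK : τ * (Real.log p / n) * (Finset.univ.filter fun j => βstar j ≠ 0).card < γ - μa)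
    (hx : x ∈ restrictedRegion βstar r) (hy : y ∈ restrictedRegion βstar r) (hxy : x ≠ y) :
    μa * ‖x - y‖ ^ 2 < ⟪gradient (L α) x - gradient (L α) y, x - y⟫ := by
  have hK₀ : 0 ≤ τ * (Real.log p / n) := by
    have := Real.log_natCast_nonneg p
    positivity
  have hnorm : 0 < ‖x - y‖ ^ 2 := pow_pos (norm_pos_iff.2 (sub_ne_zero.2 hxy)) 2
  nlinarith [hRSC α hα x y hx.2 hy.2, mul_lt_mul_of_pos_right hK hnorm,
    mul_le_mul_of_nonneg_left (l1Norm_sub_sq_le_of_mem_restrictedRegion hx hy) hK₀]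

end SparseRegion

theorem tau_mul_log_div_mul_lt_of_sample {p n s : ℕ} {τ γ μa : ℝ} (hτ : 0 ≤ τ) (hμγ : μa < γ)
    (hsample : 2 * τ * s * Real.log p / (γ - μa) < n) :
    τ * (Real.log p / n) * s < γ - μa := by
  have hγμ : 0 < γ - μa := sub_pos.2 hμγ
  have hnum : 0 ≤ τ * s * Real.log p := by
    have := Real.log_natCast_nonneg p
    positivity
  have hn : (0 : ℝ) < n := lt_of_le_of_lt (by positivity) hsample
  rw [div_lt_iff₀ hγμ] at hsample
  rw [show τ * (Real.log p / n) * s = τ * s * Real.log p / n by ring, div_lt_iff₀ hn]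
  linarith

theorem convexOn_sum_apply {ι : Type*} [Fintype ι] {φ : ℝ → ℝ}
    (hφ : ConvexOn ℝ Set.univ φ) :
    ConvexOn ℝ Set.univ fun β : EuclideanSpace ℝ ι => ∑ j, φ (β j) := by
  have := Finset.sum_induction (s := Finset.univ) (fun j β => φ ((β : EuclideanSpace ℝ ι) j))
    (ConvexOn ℝ Set.univ) (fun _ _ => ConvexOn.add) (convexOn_const 0 convex_univ)
    fun j _ => hφ.comp_linearMap (EuclideanSpace.projₗ j)
  rwa [Finset.sum_fn] at this

theorem statement_8_general {p : ℕ} (n s : ℕ)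
    (γ τ α₀ r μa lam : ℝ) (hτ : 0 < τ)
    (βstar : EuclideanSpace ℝ (Fin p))
    (hsparse : (Finset.univ.filter fun j => βstar j ≠ 0).card = s)
    (L : ℝ → EuclideanSpace ℝ (Fin p) → ℝ) (hdiff : ∀ α, Differentiable ℝ (L α))
    (hRSC : UniformRSC L βstar γ τ α₀ r n)
    (ρ : ℝ → ℝ) (hpen : AmenablePenalty ρ lam μa) (hμγ : μa < γ)
    (hsample : 2 * τ * s * Real.log p / (γ - μa) < n)
    (α : ℝ) (hα : α₀ ≤ α) :
    StrictConvexOn ℝ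
      {β : EuclideanSpace ℝ (Fin p) | (∀ j, β j ≠ 0 → βstar j ≠ 0) ∧ ‖β - βstar‖ ≤ r}
      (fun β => L α β + ∑ j, ρ (β j)) := by
  subst hsparse
  have hsmooth : StrictConvexOn ℝ (restrictedRegion βstar r)
      fun β => L α β - μa / 2 * ‖β‖ ^ 2 := by
    refine strictConvexOn_of_hasGradientAt_of_inner_sub_pos (convex_restrictedRegion βstar r)
      (fun x _ => hasGradientAt_sub_half_mul_norm_sq (hdiff α x).hasGradientAt μa)
      fun x hx y hy hxy => ?_
    have := mul_norm_sq_lt_inner_gradient_sub_of_uniformRSC hRSC hα hτ.le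
      (tau_mul_log_div_mul_lt_of_sample hτ.le hμγ hsample) hx hy hxy
    rw [sub_sub_sub_comm, inner_sub_left, ← smul_sub, real_inner_smul_left,
      real_inner_self_eq_norm_sq]
    linarith
  have hpenalty : ConvexOn ℝ (restrictedRegion βstar r)
      fun β => ∑ j, (ρ (β j) + μa / 2 * β j ^ 2) :=
    (convexOn_sum_apply hpen.conv).subset (Set.subset_univ _) (convex_restrictedRegion βstar r)
  have hsplit : (fun β => L α β + ∑ j, ρ (β j)) = (fun β => L α β - μa / 2 * ‖β‖ ^ 2) +
      fun β => ∑ j, (ρ (β j) + μa / 2 * β j ^ 2) := by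
    funext β
    rw [Pi.add_apply, Finset.sum_add_distrib, ← Finset.mul_sum, EuclideanSpace.real_norm_sq_eq]
    ring
  exact hsplit ▸ hsmooth.add_convexOn hpenalty

/-- Lemma 3: under uniform RSC, a `μ`-amenable penalty with `μ < γ`, and
`n > 2τ s log p/(γ − μ)`, the restricted objective `β ↦ L_{α,n}(β) + ρ_λ(β)` is strictly
convex over `{β : supp(β) ⊆ S, ‖β − β*‖₂ ≤ r}`. -/
theorem statement_8 {p : ℕ} (n s : ℕ) (hn : 1 ≤ n) (hp : 2 ≤ p)
    (γ τ α₀ r μa lam : ℝ) (hγ : 0 < γ) (hτ : 0 < τ) (hr : 0 < r) (hμa : 0 ≤ μa)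
    (βstar : EuclideanSpace ℝ (Fin p))
    (hsparse : (Finset.univ.filter fun j => βstar j ≠ 0).card = s)
    (L : ℝ → EuclideanSpace ℝ (Fin p) → ℝ) (hdiff : ∀ α, Differentiable ℝ (L α))
    (hRSC : UniformRSC L βstar γ τ α₀ r n)
    (ρ : ℝ → ℝ) (hpen : AmenablePenalty ρ lam μa) (hμγ : μa < γ)
    (hsample : 2 * τ * s * Real.log p / (γ - μa) < n)
    (α : ℝ) (hα : α₀ ≤ α) :
    StrictConvexOn ℝ
      {β : EuclideanSpace ℝ (Fin p) | (∀ j, β j ≠ 0 → βstar j ≠ 0) ∧ ‖β - βstar‖ ≤ r}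
      (fun β => L α β + ∑ j, ρ (β j)) :=
  statement_8_general n s γ τ α₀ r μa lam hτ βstar hsparse L hdiff hRSC ρ hpen hμγ hsample α hα

end
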